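/- Let (X_k, F_k)_{k=0}^n be a real-valued martingale such that |X_k − X_{k−1}| ≤ d almost surely for some constant d > 0 and every k ∈ {1,...,n}. Then for every α ≥ 0, setting δ = α/d, P(|X_n − X_0| ≥ αn) ≤ 2 exp(−n f(δ)), where f(δ) = ln(2)·[1 − h₂((1−δ)/2)] for 0 ≤ δ ≤ 1 and f(δ) = +∞ for δ > 1 (i.e., the probability is zero when δ > 1). This bound improves the Azuma–Hoeffding bound 2 exp(−δ²n/2), since f(δ) > δ²/2 for every δ > 0. -/

import Mathlib

open MeasureTheory ProbabilityTheory

/-- The binary entropy function to base 2: `h₂(x) = -x log₂ x - (1-x) log₂ (1-x)`. -/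
noncomputable def binaryEntropy2 (x : ℝ) : ℝ :=
  -(x * Real.logb 2 x) - (1 - x) * Real.logb 2 (1 - x)

/-- The exponent `f(δ) = ln 2 · [1 - h₂((1-δ)/2)]` (the value of the extended exponent on
`0 ≤ δ ≤ 1`; for `δ > 1` the exponent is `+∞`, i.e. the probability vanishes). -/
noncomputable def azumaExponent (δ : ℝ) : ℝ :=
  Real.log 2 * (1 - binaryEntropy2 ((1 - δ) / 2))

/-! Chernoff's method. By convexity of `exp`, an increment `Y` with `|Y| ≤ d` satisfies
`exp (l Y) ≤ cosh (l d) + (Y / d) sinh (l d)`, and the last term has zero conditional mean, so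
`E exp (l (X_n - X_0)) ≤ cosh (l d) ^ n`. Markov's inequality then bounds `P(X_n - X_0 ≥ α n)` by
`(exp (-l α) cosh (l d)) ^ n`, and the optimal choice `l d = artanh δ` gives exactly
`exp (-n f(δ))`; for `δ = 1` one lets `l → ∞` instead. Finally `f(δ) > δ²/2` because `f(0) = 0`
and `f' = artanh` exceeds the identity on `(0, 1)`. -/

open Real Set Filter Topology

lemma azumaExponent_eq (δ : ℝ) :
    azumaExponent δ = ((1 + δ) * log (1 + δ) + (1 - δ) * log (1 - δ)) / 2 := by
  have mul_log_half (x : ℝ) : x * log (x / 2) = x * log x - x * log 2 := by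
    rcases eq_or_ne x 0 with rfl | hx
    · simp
    · rw [log_div hx two_ne_zero]; ring
  have hlog2 : log 2 ≠ 0 := (log_pos one_lt_two).ne'
  rw [azumaExponent, binaryEntropy2, show 1 - (1 - δ) / 2 = (1 + δ) / 2 by ring, logb, logb]
  field_simp
  linear_combination mul_log_half (1 - δ) + mul_log_half (1 + δ)

lemma azumaExponent_zero : azumaExponent 0 = 0 := by simp [azumaExponent_eq]

lemma azumaExponent_one : azumaExponent 1 = log 2 := by
  rw [azumaExponent_eq]; norm_num

@[fun_prop]
lemma continuous_azumaExponent : Continuous azumaExponent := by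
  rw [funext azumaExponent_eq]
  have := continuous_mul_log
  fun_prop

lemma hasDerivAt_azumaExponent {δ : ℝ} (hδ : δ ∈ Ioo (-1) 1) :
    HasDerivAt azumaExponent (artanh δ) δ := by
  obtain ⟨h₀, h₁⟩ := hδ
  have hp := (hasDerivAt_mul_log (x := 1 + δ) (by linarith)).comp δ ((hasDerivAt_id δ).const_add 1)
  have hm := (hasDerivAt_mul_log (x := 1 - δ) (by linarith)).comp δ ((hasDerivAt_id δ).const_sub 1)
  rw [funext azumaExponent_eq, artanh_eq_half_log ⟨h₀.le, h₁.le⟩,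
    log_div (by linarith) (by linarith)]
  exact ((hp.add hm).div_const 2).congr_deriv (by ring)

lemma lt_artanh {x : ℝ} (h₀ : 0 < x) (h₁ : x < 1) : x < artanh x := by
  have hsum := hasSum_log_sub_log_of_abs_lt_one (abs_lt.2 ⟨by linarith, h₁⟩)
  have hle := sum_le_hasSum (Finset.range 2) (fun k _ => by positivity) hsum
  rw [artanh_eq_half_log ⟨by linarith, h₁.le⟩, log_div (by linarith) (by linarith)]
  simp only [one_div, Finset.sum_range_succ, Finset.range_one, Finset.sum_singleton,
    CharP.cast_eq_zero, mul_zero, zero_add, inv_one, mul_one, pow_one, Nat.cast_one,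
    Nat.reduceAdd] at hle
  nlinarith [pow_pos h₀ 3]

lemma sq_div_two_lt_azumaExponent {δ : ℝ} (h₀ : 0 < δ) (h₁ : δ ≤ 1) :
    δ ^ 2 / 2 < azumaExponent δ := by
  have hmono : StrictMonoOn (fun t => azumaExponent t - t ^ 2 / 2) (Icc 0 δ) := by
    refine strictMonoOn_of_hasDerivWithinAt_pos (convex_Icc 0 δ) (by fun_prop)
      (f' := fun t => artanh t - t) (fun t ht => ?_) (fun t ht => ?_)
    all_goals rw [interior_Icc] at ht; obtain ⟨ht₀, ht₁⟩ := ht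
    · have := hasDerivAt_azumaExponent ⟨by linarith, by linarith⟩
      exact (this.sub (hasDerivAt_pow 2 t |>.div_const 2)).hasDerivWithinAt.congr_deriv (by ring)
    · linarith [lt_artanh ht₀ (by linarith)]
  have := hmono (left_mem_Icc.2 h₀.le) (right_mem_Icc.2 h₀.le) h₀
  simpa [azumaExponent_zero] using this

lemma exp_neg_azumaExponent_eq {δ : ℝ} (hδ : δ ∈ Ioo (-1) 1) :
    exp (-azumaExponent δ) = exp (-(artanh δ * δ)) * cosh (artanh δ) := by
  obtain ⟨h₀, h₁⟩ := hδ
  have hp : 0 < 1 + δ := by linarith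
  have hm : 0 < 1 - δ := by linarith
  have hartanh : artanh δ = (log (1 + δ) - log (1 - δ)) / 2 := by
    rw [artanh_eq_half_log ⟨h₀.le, h₁.le⟩, log_div hp.ne' hm.ne']; ring
  have hlog_cosh : log (cosh (artanh δ)) = -(log (1 + δ) + log (1 - δ)) / 2 := by
    rw [cosh_artanh ⟨h₀, h₁⟩, one_div, log_inv, log_sqrt (by nlinarith),
      show 1 - δ ^ 2 = (1 + δ) * (1 - δ) by ring, log_mul hp.ne' hm.ne']
    ring
  rw [← exp_log (cosh_pos (artanh δ)), ← exp_add, hlog_cosh, hartanh, azumaExponent_eq]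
  ring_nf

lemma tendsto_exp_neg_mul_cosh_atTop :
    Tendsto (fun b => exp (-b) * cosh b) atTop (𝓝 (exp (-azumaExponent 1))) := by
  have hlim : Tendsto (fun b => (1 + exp (-b) ^ 2) / 2) atTop (𝓝 ((1 + 0 ^ 2) / 2)) :=
    ((tendsto_exp_neg_atTop_nhds_zero.pow 2).const_add 1).div_const 2
  rw [azumaExponent_one, exp_neg, exp_log two_pos]
  convert hlim using 2 with b
  · rw [cosh_eq, exp_neg]
    field_simp
  · norm_num

lemma le_exp_neg_mul_azumaExponent {δ : ℝ} (h₀ : 0 ≤ δ) (h₁ : δ ≤ 1) {n : ℕ} {c : ℝ}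
    (hc : ∀ b, 0 ≤ b → c ≤ (exp (-(b * δ)) * cosh b) ^ n) :
    c ≤ exp (-n * azumaExponent δ) := by
  rw [neg_mul, ← mul_neg, exp_nat_mul]
  rcases h₁.lt_or_eq with h₁ | rfl
  · rw [exp_neg_azumaExponent_eq ⟨by linarith, h₁⟩]
    exact hc _ (artanh_nonneg h₀)
  · refine ge_of_tendsto (tendsto_exp_neg_mul_cosh_atTop.pow n) ?_
    filter_upwards [eventually_ge_atTop 0] with b hb
    simpa using hc b hb

lemma exp_mul_le_cosh_add_sinh {d y : ℝ} (hd : 0 < d) (hy : |y| ≤ d) (l : ℝ) :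
    exp (l * y) ≤ cosh (l * d) + y / d * sinh (l * d) := by
  obtain ⟨hy₁, hy₂⟩ := abs_le.mp hy
  have key := convexOn_exp.2 (mem_univ (l * d)) (mem_univ (-(l * d)))
    (div_nonneg (by linarith : 0 ≤ d + y) (by positivity : 0 ≤ 2 * d))
    (div_nonneg (by linarith : 0 ≤ d - y) (by positivity : 0 ≤ 2 * d)) (by field_simp; ring)
  have harg : (d + y) / (2 * d) * (l * d) + (d - y) / (2 * d) * -(l * d) = l * y := by
    field_simp; ring
  simp only [smul_eq_mul, harg] at key
  refine key.trans_eq ?_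
  rw [cosh_eq, sinh_eq]; field_simp; ring

lemma MeasureTheory.Martingale.integral_mul_sub_eq_zero {Ω ι : Type*} [Preorder ι]
    {m0 : MeasurableSpace Ω} {μ : Measure Ω} [IsFiniteMeasure μ] {ℱ : Filtration ι m0} {X : ι → Ω → ℝ}
    (hX : Martingale X ℱ μ) {i j : ι} (hij : i ≤ j) {Z : Ω → ℝ}
    (hZ : StronglyMeasurable[ℱ i] Z) (hZX : Integrable (Z * (X j - X i)) μ) :
    ∫ ω, Z ω * (X j ω - X i ω) ∂μ = 0 := by
  have hcond : μ[X j - X i | ℱ i] =ᵐ[μ] 0 := by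
    filter_upwards [condExp_sub (hX.integrable j) (hX.integrable i) (ℱ i),
      hX.condExp_ae_eq hij, hX.condExp_ae_eq (le_refl i)] with ω h hj hi
    simp [h, hj, hi]
  calc ∫ ω, Z ω * (X j ω - X i ω) ∂μ = ∫ ω, μ[Z * (X j - X i) | ℱ i] ω ∂μ :=
        (integral_condExp (ℱ.le i)).symm
    _ = ∫ ω, (Z * μ[X j - X i | ℱ i]) ω ∂μ := integral_congr_ae
        (condExp_mul_of_stronglyMeasurable_left hZ hZX ((hX.integrable j).sub (hX.integrable i)))
    _ = 0 := integral_eq_zero_of_ae (by filter_upwards [hcond] with ω h; simp [h])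

section BoundedIncrements

variable {Ω : Type*} {m0 : MeasurableSpace Ω} {μ : Measure Ω} {X : ℕ → Ω → ℝ} {n : ℕ} {d : ℝ}

lemma ae_abs_sub_zero_le (hjump : ∀ k < n, ∀ᵐ ω ∂μ, |X (k + 1) ω - X k ω| ≤ d) {k : ℕ}
    (hk : k ≤ n) : ∀ᵐ ω ∂μ, |X k ω - X 0 ω| ≤ k * d := by
  induction k with
  | zero => simp
  | succ k ih =>
    filter_upwards [ih (by omega), hjump k (by omega)] with ω hk hstep
    calc |X (k + 1) ω - X 0 ω| ≤ |X (k + 1) ω - X k ω| + |X k ω - X 0 ω| := abs_sub_le _ _ _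
      _ ≤ (k + 1 : ℕ) * d := by push_cast; linarith

lemma integrable_exp_mul_sub_zero [IsFiniteMeasure μ] (hX : ∀ k, AEStronglyMeasurable (X k) μ)
    (hjump : ∀ k < n, ∀ᵐ ω ∂μ, |X (k + 1) ω - X k ω| ≤ d) {k : ℕ} (hk : k ≤ n) (l : ℝ) :
    Integrable (fun ω => exp (l * (X k ω - X 0 ω))) μ := by
  refine .of_bound (by fun_prop) (exp (|l| * (k * d))) ?_
  filter_upwards [ae_abs_sub_zero_le hjump hk] with ω hω
  rw [norm_eq_abs, abs_exp, exp_le_exp]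
  calc l * (X k ω - X 0 ω) ≤ |l| * |X k ω - X 0 ω| := by rw [← abs_mul]; exact le_abs_self _
    _ ≤ |l| * (k * d) := by gcongr

namespace MeasureTheory.Martingale

variable {ℱ : Filtration ℕ m0}

lemma mgf_sub_zero_succ_le [IsFiniteMeasure μ] (hX : Martingale X ℱ μ) (hd : 0 < d)
    {m : ℕ} (hjump : ∀ᵐ ω ∂μ, |X (m + 1) ω - X m ω| ≤ d) {l : ℝ}
    (hZ : Integrable (fun ω => exp (l * (X m ω - X 0 ω))) μ) :
    mgf (X (m + 1) - X 0) μ l ≤ cosh (l * d) * mgf (X m - X 0) μ l := by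
  set Z := fun ω => exp (l * (X m ω - X 0 ω))
  have hZm : StronglyMeasurable[ℱ m] Z :=
    continuous_exp.comp_stronglyMeasurable
      (((hX.stronglyAdapted m).sub ((hX.stronglyAdapted 0).mono (ℱ.mono m.zero_le))).const_mul l)
  have hZY : Integrable (fun ω => Z ω * (X (m + 1) ω - X m ω)) μ :=
    hZ.mul_bdd ((hX.integrable (m + 1)).sub (hX.integrable m)).aestronglyMeasurable
      (by simpa using hjump)
  have hbound : ∀ᵐ ω ∂μ, exp (l * (X (m + 1) ω - X 0 ω))
      ≤ cosh (l * d) * Z ω + sinh (l * d) / d * (Z ω * (X (m + 1) ω - X m ω)) := by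
    filter_upwards [hjump] with ω hω
    rw [show l * (X (m + 1) ω - X 0 ω) = l * (X m ω - X 0 ω) + l * (X (m + 1) ω - X m ω) by ring,
      exp_add]
    calc Z ω * exp (l * (X (m + 1) ω - X m ω))
        ≤ Z ω * (cosh (l * d) + (X (m + 1) ω - X m ω) / d * sinh (l * d)) :=
          mul_le_mul_of_nonneg_left (exp_mul_le_cosh_add_sinh hd hω l) (exp_pos _).le
      _ = _ := by ring
  calc mgf (X (m + 1) - X 0) μ l
      ≤ ∫ ω, (cosh (l * d) * Z ω + sinh (l * d) / d * (Z ω * (X (m + 1) ω - X m ω))) ∂μ :=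
        integral_mono_of_nonneg (ae_of_all _ fun _ => (exp_pos _).le)
          ((hZ.const_mul _).add (hZY.const_mul _)) hbound
    _ = cosh (l * d) * mgf (X m - X 0) μ l := by
        rw [integral_add (hZ.const_mul _) (hZY.const_mul _), integral_const_mul, integral_const_mul,
          hX.integral_mul_sub_eq_zero m.le_succ hZm hZY, mul_zero, add_zero]
        rfl

variable [IsProbabilityMeasure μ]

lemma mgf_sub_zero_le (hX : Martingale X ℱ μ) (hd : 0 < d)
    (hjump : ∀ k < n, ∀ᵐ ω ∂μ, |X (k + 1) ω - X k ω| ≤ d) (l : ℝ) {k : ℕ} (hk : k ≤ n) :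
    mgf (X k - X 0) μ l ≤ cosh (l * d) ^ k := by
  induction k with
  | zero => simp [mgf]
  | succ k ih =>
    calc mgf (X (k + 1) - X 0) μ l ≤ cosh (l * d) * mgf (X k - X 0) μ l :=
          hX.mgf_sub_zero_succ_le hd (hjump k hk) (integrable_exp_mul_sub_zero
            (fun k => (hX.integrable k).aestronglyMeasurable) hjump (by omega) l)
      _ ≤ cosh (l * d) * cosh (l * d) ^ k := by gcongr; exact ih (by omega)
      _ = cosh (l * d) ^ (k + 1) := (pow_succ' _ _).symm

lemma measureReal_sub_zero_ge_le (hX : Martingale X ℱ μ) (hd : 0 < d)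
    (hjump : ∀ k < n, ∀ᵐ ω ∂μ, |X (k + 1) ω - X k ω| ≤ d) (α : ℝ) {l : ℝ} (hl : 0 ≤ l) :
    μ.real {ω | α * n ≤ X n ω - X 0 ω} ≤ (exp (-(l * α)) * cosh (l * d)) ^ n :=
  calc μ.real {ω | α * n ≤ X n ω - X 0 ω} ≤ exp (-l * (α * n)) * mgf (X n - X 0) μ l :=
        measure_ge_le_exp_mul_mgf _ hl (integrable_exp_mul_sub_zero
          (fun k => (hX.integrable k).aestronglyMeasurable) hjump le_rfl l)
    _ ≤ exp (-l * (α * n)) * cosh (l * d) ^ n := by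
        gcongr; exact hX.mgf_sub_zero_le hd hjump l le_rfl
    _ = (exp (-(l * α)) * cosh (l * d)) ^ n := by rw [mul_pow, ← exp_nat_mul]; ring_nf

lemma measureReal_sub_zero_ge_le_exp_neg_mul_azumaExponent (hX : Martingale X ℱ μ)
    (hd : 0 < d) (hjump : ∀ k < n, ∀ᵐ ω ∂μ, |X (k + 1) ω - X k ω| ≤ d) {α : ℝ} (hα : 0 ≤ α)
    (hαd : α ≤ d) :
    μ.real {ω | α * n ≤ X n ω - X 0 ω} ≤ exp (-n * azumaExponent (α / d)) :=
  le_exp_neg_mul_azumaExponent (div_nonneg hα hd.le) ((div_le_one hd).2 hαd) fun b hb => by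
    convert hX.measureReal_sub_zero_ge_le hd hjump α (div_nonneg hb hd.le) using 4
    · field_simp
    · field_simp

lemma measureReal_abs_sub_zero_ge_le (hX : Martingale X ℱ μ)
    (hd : 0 < d) (hjump : ∀ k < n, ∀ᵐ ω ∂μ, |X (k + 1) ω - X k ω| ≤ d) {α : ℝ} (hα : 0 ≤ α)
    (hαd : α ≤ d) :
    μ.real {ω | α * n ≤ |X n ω - X 0 ω|} ≤ 2 * exp (-n * azumaExponent (α / d)) := by
  have hjump_neg : ∀ k < n, ∀ᵐ ω ∂μ, |(-X) (k + 1) ω - (-X) k ω| ≤ d := fun k hk => by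
    filter_upwards [hjump k hk] with ω h
    simpa only [Pi.neg_apply, neg_sub_neg, abs_sub_comm] using h
  have hsplit : {ω | α * n ≤ |X n ω - X 0 ω|}
      ⊆ {ω | α * n ≤ X n ω - X 0 ω} ∪ {ω | α * n ≤ (-X) n ω - (-X) 0 ω} := fun ω h => by
    simpa only [mem_union, mem_ofPred_eq, Pi.neg_apply, neg_sub_neg, le_abs, neg_sub] using h
  calc μ.real {ω | α * n ≤ |X n ω - X 0 ω|}
      ≤ μ.real {ω | α * n ≤ X n ω - X 0 ω} + μ.real {ω | α * n ≤ (-X) n ω - (-X) 0 ω} :=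
        (measureReal_mono hsplit).trans (measureReal_union_le _ _)
    _ ≤ 2 * exp (-n * azumaExponent (α / d)) := by
        linarith [hX.measureReal_sub_zero_ge_le_exp_neg_mul_azumaExponent hd hjump hα hαd,
          hX.neg.measureReal_sub_zero_ge_le_exp_neg_mul_azumaExponent hd hjump_neg hα hαd]

end MeasureTheory.Martingale

end BoundedIncrements

/-- Tightened Azuma–Hoeffding inequality for martingales with jumps bounded by `d`:
with `δ = α/d`, `P(|X_n - X_0| ≥ αn) ≤ 2 exp(-n f(δ))` where
`f(δ) = ln 2 [1 - h₂((1-δ)/2)]` for `0 ≤ δ ≤ 1`, and the probability is zero for `δ > 1`.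
Moreover the bound improves on Azuma–Hoeffding since `f(δ) > δ²/2` for every `δ > 0`
(on the range `δ ≤ 1` where `f` is finite; for `δ > 1` one has `f(δ) = +∞`). -/
theorem tightened_azuma_hoeffding {Ω : Type*} {m0 : MeasurableSpace Ω} {μ : Measure Ω}
    [IsProbabilityMeasure μ] {ℱ : Filtration ℕ m0} {X : ℕ → Ω → ℝ}
    (hX : Martingale X ℱ μ) {n : ℕ} (hn : 0 < n) {d : ℝ} (hd : 0 < d)
    (hjump : ∀ k ∈ Finset.Icc 1 n, ∀ᵐ ω ∂μ, |X k ω - X (k-1) ω| ≤ d)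
    {α : ℝ} (hα : 0 ≤ α) :
    (α/d ≤ 1 → μ {ω | α * n ≤ |X n ω - X 0 ω|} ≤
        ENNReal.ofReal (2 * Real.exp (-(n : ℝ) * azumaExponent (α/d)))) ∧
    (1 < α/d → μ {ω | α * n ≤ |X n ω - X 0 ω|} = 0) ∧
    (∀ δ : ℝ, 0 < δ → δ ≤ 1 → δ^2/2 < azumaExponent δ) := by
  have hjump' : ∀ k < n, ∀ᵐ ω ∂μ, |X (k + 1) ω - X k ω| ≤ d := fun k hk => by
    simpa using hjump (k + 1) (Finset.mem_Icc.2 ⟨by omega, hk⟩)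
  refine ⟨fun hδ => ?_, fun hδ => ?_, fun δ h₀ h₁ => sq_div_two_lt_azumaExponent h₀ h₁⟩
  · rw [ENNReal.le_ofReal_iff_toReal_le (measure_ne_top _ _) (by positivity)]
    exact hX.measureReal_abs_sub_zero_ge_le hd hjump' hα ((div_le_one hd).1 hδ)
  · have hnd : n * d < α * n := by
      rw [mul_comm α]; exact mul_lt_mul_of_pos_left ((one_lt_div hd).1 hδ) (Nat.cast_pos.2 hn)
    refine measure_mono_null (fun ω h => ?_) (ae_iff.1 (ae_abs_sub_zero_le hjump' le_rfl))
    exact fun h' => absurd (h.trans h') (not_le.2 hnd)
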